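/- Let N ≥ 1 and ε ∈ (0,1). Let η_ε ∈ C^∞([0,∞)) be such that r ↦ η_ε(r) r is smooth, increasing, equals r for r < 1−ε, and equals 1−ε/2 for r > 1−ε/2. Define a_ε : ℝ^N → ℝ^N by a_ε(z) = z / √(1 − η_ε(|z|)² |z|²). Then: (i) a_ε ∈ C¹(ℝ^N, ℝ^N); (ii) there exists a constant L > 1, depending only on ε and η_ε, such that |a_ε(z)| + ‖∂a_ε(z)‖ |z| ≤ L |z| for all z ∈ ℝ^N, where ∂a_ε(z) denotes the Jacobian matrix of a_ε at z; (iii) ⟨∂a_ε(z) λ, λ⟩ ≥ |λ|² for all z, λ ∈ ℝ^N. -/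

import Mathlib

open MeasureTheory Real


noncomputable def rbiH (η : ℝ → ℝ) (t : ℝ) : ℝ :=
  if 0 < t then (η (Real.sqrt t) * Real.sqrt t) ^ 2 else t

noncomputable def rbiPsi (η : ℝ → ℝ) (t : ℝ) : ℝ := (Real.sqrt (1 - rbiH η t))⁻¹

section Aux
variable {ε : ℝ} {η : ℝ → ℝ}

lemma rbi_g_nonneg (hmono : MonotoneOn (fun r => η r * r) (Set.Ici 0)) :
    ∀ r, 0 ≤ r → 0 ≤ η r * r := by
  intro r hr
  have h0 := hmono (Set.mem_Ici.2 le_rfl) (Set.mem_Ici.2 hr) hr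
  simpa using h0

lemma rbi_g_le (hε : ε ∈ Set.Ioo (0:ℝ) 1)
    (hmono : MonotoneOn (fun r => η r * r) (Set.Ici 0))
    (hhigh : ∀ r : ℝ, 1 - ε / 2 < r → η r * r = 1 - ε / 2) :
    ∀ r, 0 ≤ r → η r * r ≤ 1 - ε / 2 := by
  intro r hr
  have hm1 : r ≤ max r 1 + 1 := by have := le_max_left r 1; linarith
  have hm0 : (0:ℝ) ≤ max r 1 + 1 := by have := le_max_right r 1; linarith
  have h1 : 1 - ε / 2 < max r 1 + 1 := by have := le_max_right r 1; linarith [hε.1]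
  have hmax := hhigh _ h1
  have := hmono (Set.mem_Ici.2 hr) (Set.mem_Ici.2 hm0) hm1
  simpa [hmax] using this

lemma rbi_h_low (hε : ε ∈ Set.Ioo (0:ℝ) 1)
    (hlow : ∀ r : ℝ, 0 ≤ r → r < 1 - ε → η r * r = r) :
    ∀ t, t < (1 - ε)^2 → rbiH η t = t := by
  intro t ht
  unfold rbiH
  split_ifs with h
  · have hlt : Real.sqrt t < 1 - ε := (Real.sqrt_lt' (by linarith [hε.2])).2 ht
    rw [hlow _ (Real.sqrt_nonneg t) hlt, Real.sq_sqrt h.le]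
  · rfl

lemma rbi_h_nonneg : ∀ t, 0 ≤ t → 0 ≤ rbiH η t := by
  intro t ht
  unfold rbiH
  split_ifs with h
  · positivity
  · exact ht

lemma rbi_h_le (hε : ε ∈ Set.Ioo (0:ℝ) 1)
    (hmono : MonotoneOn (fun r => η r * r) (Set.Ici 0))
    (hhigh : ∀ r : ℝ, 1 - ε / 2 < r → η r * r = 1 - ε / 2) :
    ∀ t, rbiH η t ≤ (1 - ε / 2)^2 := by
  intro t
  unfold rbiH
  split_ifs with h
  · exact pow_le_pow_left₀ (rbi_g_nonneg hmono _ (Real.sqrt_nonneg t))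
      (rbi_g_le hε hmono hhigh _ (Real.sqrt_nonneg t)) 2
  · exact (not_lt.1 h).trans (sq_nonneg _)

lemma rbi_one_sub_h_pos (hε : ε ∈ Set.Ioo (0:ℝ) 1)
    (hmono : MonotoneOn (fun r => η r * r) (Set.Ici 0))
    (hhigh : ∀ r : ℝ, 1 - ε / 2 < r → η r * r = 1 - ε / 2) :
    ∀ t, 0 < 1 - rbiH η t := by
  intro t
  have h1 := rbi_h_le hε hmono hhigh t
  have h2 : (1 - ε / 2)^2 < 1 := by nlinarith [hε.1, hε.2]
  linarith

lemma rbi_h_mono (hmono : MonotoneOn (fun r => η r * r) (Set.Ici 0)) :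
    Monotone (rbiH η) := by
  intro s t hst
  unfold rbiH
  split_ifs with hs ht ht
  · have hsq := Real.sqrt_le_sqrt hst
    have := hmono (Set.mem_Ici.2 (Real.sqrt_nonneg s)) (Set.mem_Ici.2 (Real.sqrt_nonneg t)) hsq
    exact pow_le_pow_left₀ (rbi_g_nonneg hmono _ (Real.sqrt_nonneg s)) this 2
  · exact absurd (lt_of_lt_of_le hs hst) ht
  · exact (not_lt.1 hs).trans (sq_nonneg _)
  · exact hst

lemma rbi_h_contDiff (hε : ε ∈ Set.Ioo (0:ℝ) 1)
    (hηsmooth : ContDiffOn ℝ (⊤ : ℕ∞) η (Set.Ici 0))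
    (hlow : ∀ r : ℝ, 0 ≤ r → r < 1 - ε → η r * r = r) :
    ContDiff ℝ 1 (rbiH η) := by
  rw [contDiff_iff_contDiffAt]
  intro t
  rcases lt_or_ge t ((1 - ε)^2) with ht | ht
  · exact contDiffAt_id.congr_of_eventuallyEq
      (Filter.eventuallyEq_of_mem (Iio_mem_nhds ht) fun s hs => rbi_h_low hε hlow s hs)
  · have hpos0 : (0:ℝ) < (1 - ε)^2 := pow_pos (by linarith [hε.2]) 2
    have htpos : 0 < t := lt_of_lt_of_le hpos0 ht
    have hsq : ContDiffAt ℝ 1 Real.sqrt t := Real.contDiffAt_sqrt htpos.ne'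
    have hηat : ContDiffAt ℝ 1 η (Real.sqrt t) :=
      (hηsmooth.contDiffAt (Ici_mem_nhds (Real.sqrt_pos.2 htpos))).of_le (by simp)
    have hfun : ContDiffAt ℝ 1 (fun s => (η (Real.sqrt s) * Real.sqrt s)^2) t :=
      ((hηat.comp t hsq).mul hsq).pow 2
    exact hfun.congr_of_eventuallyEq
      (Filter.eventuallyEq_of_mem (Ioi_mem_nhds htpos) fun s hs => if_pos hs)

lemma rbi_psi_contDiff (hε : ε ∈ Set.Ioo (0:ℝ) 1)
    (hηsmooth : ContDiffOn ℝ (⊤ : ℕ∞) η (Set.Ici 0))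
    (hmono : MonotoneOn (fun r => η r * r) (Set.Ici 0))
    (hlow : ∀ r : ℝ, 0 ≤ r → r < 1 - ε → η r * r = r)
    (hhigh : ∀ r : ℝ, 1 - ε / 2 < r → η r * r = 1 - ε / 2) :
    ContDiff ℝ 1 (rbiPsi η) := by
  unfold rbiPsi
  exact ((contDiff_const.sub (rbi_h_contDiff hε hηsmooth hlow)).sqrt
      fun t => (rbi_one_sub_h_pos hε hmono hhigh t).ne').inv
      fun t => (Real.sqrt_pos.2 (rbi_one_sub_h_pos hε hmono hhigh t)).ne'

lemma rbi_psi_pos (hε : ε ∈ Set.Ioo (0:ℝ) 1)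
    (hmono : MonotoneOn (fun r => η r * r) (Set.Ici 0))
    (hhigh : ∀ r : ℝ, 1 - ε / 2 < r → η r * r = 1 - ε / 2) :
    ∀ t, 0 < rbiPsi η t := by
  intro t
  exact inv_pos.2 (Real.sqrt_pos.2 (rbi_one_sub_h_pos hε hmono hhigh t))

lemma rbi_psi_mono (hε : ε ∈ Set.Ioo (0:ℝ) 1)
    (hmono : MonotoneOn (fun r => η r * r) (Set.Ici 0))
    (hhigh : ∀ r : ℝ, 1 - ε / 2 < r → η r * r = 1 - ε / 2) :
    Monotone (rbiPsi η) := by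
  intro s t hst
  unfold rbiPsi
  have h1 := rbi_one_sub_h_pos hε hmono hhigh t
  have h2 : 1 - rbiH η t ≤ 1 - rbiH η s := by
    have := rbi_h_mono hmono hst; linarith
  exact inv_anti₀ (Real.sqrt_pos.2 h1) (Real.sqrt_le_sqrt h2)

lemma rbi_psi_ge_one (hε : ε ∈ Set.Ioo (0:ℝ) 1)
    (hmono : MonotoneOn (fun r => η r * r) (Set.Ici 0))
    (hhigh : ∀ r : ℝ, 1 - ε / 2 < r → η r * r = 1 - ε / 2) :
    ∀ t, 0 ≤ t → 1 ≤ rbiPsi η t := by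
  intro t ht
  have h1 := rbi_one_sub_h_pos hε hmono hhigh t
  have h2 : Real.sqrt (1 - rbiH η t) ≤ 1 := by
    rw [Real.sqrt_le_one]
    have := rbi_h_nonneg (η := η) t ht; linarith
  have := inv_anti₀ (Real.sqrt_pos.2 h1) h2
  simpa [rbiPsi] using this

lemma rbi_psi_le (hε : ε ∈ Set.Ioo (0:ℝ) 1)
    (hmono : MonotoneOn (fun r => η r * r) (Set.Ici 0))
    (hhigh : ∀ r : ℝ, 1 - ε / 2 < r → η r * r = 1 - ε / 2) :
    ∀ t, rbiPsi η t ≤ (Real.sqrt (1 - (1 - ε / 2)^2))⁻¹ := by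
  intro t
  have hδ : 0 < 1 - (1 - ε / 2)^2 := by nlinarith [hε.1, hε.2]
  have hle : 1 - (1 - ε / 2)^2 ≤ 1 - rbiH η t := by
    have := rbi_h_le hε hmono hhigh t; linarith
  exact inv_anti₀ (Real.sqrt_pos.2 hδ) (Real.sqrt_le_sqrt hle)

lemma rbi_psi_high (hε : ε ∈ Set.Ioo (0:ℝ) 1)
    (hhigh : ∀ r : ℝ, 1 - ε / 2 < r → η r * r = 1 - ε / 2) :
    ∀ t, (1 - ε / 2)^2 < t → rbiPsi η t = (Real.sqrt (1 - (1 - ε / 2)^2))⁻¹ := by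
  intro t ht
  have ht0 : 0 < t := (sq_nonneg _).trans_lt ht
  have hlt : 1 - ε / 2 < Real.sqrt t := (Real.lt_sqrt (by linarith [hε.2])).2 ht
  unfold rbiPsi rbiH
  rw [if_pos ht0, hhigh _ hlt]

lemma rbi_deriv_nonneg {f : ℝ → ℝ} (hm : Monotone f) {x d : ℝ}
    (hd : HasDerivAt f d x) : 0 ≤ d := by
  have h := (hd.hasDerivWithinAt (s := Set.Ioi x))
  rw [hasDerivWithinAt_iff_tendsto_slope] at h
  have hne : Set.Ioi x \ {x} = Set.Ioi x := by
    apply Set.diff_singleton_eq_self; simp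
  rw [hne] at h
  refine ge_of_tendsto h ?_
  filter_upwards [self_mem_nhdsWithin] with y hy
  rw [slope_def_field]
  exact div_nonneg (sub_nonneg.2 (hm (le_of_lt hy))) (sub_nonneg.2 (le_of_lt hy))

end Aux

/-- (Step 6: the regularized operator.) Let `ε ∈ (0,1)` and let
`η_ε` be smooth on `[0,∞)` with `r ↦ η_ε(r) r` increasing, equal to `r` for `r < 1−ε`
and to `1−ε/2` for `r > 1−ε/2`.  Then `a_ε(z) = z/√(1−η_ε(|z|)²|z|²)` is `C¹`, satisfies
the growth bound `|a_ε(z)| + ‖∂a_ε(z)‖|z| ≤ L|z|` for some `L > 1` depending only on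
`ε` and `η_ε`, and the ellipticity bound `⟨∂a_ε(z)λ, λ⟩ ≥ |λ|²`. -/
theorem regularized_BI_operator_growth_and_ellipticity
    (N : ℕ) (hN : 1 ≤ N) (ε : ℝ) (hε : ε ∈ Set.Ioo (0 : ℝ) 1)
    (η : ℝ → ℝ)
    (hηsmooth : ContDiffOn ℝ (⊤ : ℕ∞) η (Set.Ici 0))
    (hmono : MonotoneOn (fun r => η r * r) (Set.Ici 0))
    (hlow : ∀ r : ℝ, 0 ≤ r → r < 1 - ε → η r * r = r)
    (hhigh : ∀ r : ℝ, 1 - ε / 2 < r → η r * r = 1 - ε / 2)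
    (a : EuclideanSpace ℝ (Fin N) → EuclideanSpace ℝ (Fin N))
    (ha : ∀ z, a z = (Real.sqrt (1 - (η ‖z‖) ^ 2 * ‖z‖ ^ 2))⁻¹ • z) :
    ContDiff ℝ 1 a ∧
    (∃ L : ℝ, 1 < L ∧ ∀ z, ‖a z‖ + ‖fderiv ℝ a z‖ * ‖z‖ ≤ L * ‖z‖) ∧
    (∀ z lam : EuclideanSpace ℝ (Fin N),
      ‖lam‖ ^ 2 ≤ (inner ℝ (fderiv ℝ a z lam) lam : ℝ)) := by
  have haA : a = fun z => rbiPsi η (‖z‖^2) • z := by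
    funext z
    rw [ha z]
    rcases eq_or_ne z 0 with rfl | hz
    · simp
    · have hz0 : 0 < ‖z‖ := norm_pos_iff.2 hz
      have hh : rbiH η (‖z‖^2) = (η ‖z‖)^2 * ‖z‖^2 := by
        unfold rbiH
        rw [if_pos (by positivity), Real.sqrt_sq hz0.le]
        ring
      unfold rbiPsi
      rw [hh]
  subst haA
  -- basic facts
  have hψ := rbi_psi_contDiff hε hηsmooth hmono hlow hhigh
  have hψpos := rbi_psi_pos hε hmono hhigh
  have hψmono := rbi_psi_mono hε hmono hhigh
  have hψge1 := rbi_psi_ge_one hε hmono hhigh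
  have hψle := rbi_psi_le hε hmono hhigh
  have hδ : 0 < 1 - (1 - ε / 2)^2 := by nlinarith [hε.1, hε.2]
  set c : ℝ := (Real.sqrt (1 - (1 - ε / 2)^2))⁻¹ with hcdef
  have hcpos : 0 < c := inv_pos.2 (Real.sqrt_pos.2 hδ)
  -- C¹
  have hC1 : ContDiff ℝ 1 (fun z : EuclideanSpace ℝ (Fin N) => rbiPsi η (‖z‖^2) • z) :=
    (hψ.comp (contDiff_norm_sq ℝ)).smul contDiff_id
  -- derivative formula
  have hD : ∀ z : EuclideanSpace ℝ (Fin N),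
      HasFDerivAt (fun z : EuclideanSpace ℝ (Fin N) => rbiPsi η (‖z‖^2) • z)
        (rbiPsi η (‖z‖^2) • ContinuousLinearMap.id ℝ (EuclideanSpace ℝ (Fin N)) +
          ((deriv (rbiPsi η) (‖z‖^2)) • (2 • innerSL ℝ z)).smulRight z) z := by
    intro z
    have h1 : HasFDerivAt (fun x : EuclideanSpace ℝ (Fin N) => ‖x‖^2) (2 • innerSL ℝ z) z :=
      (hasStrictFDerivAt_norm_sq z).hasFDerivAt
    have h2 : HasDerivAt (rbiPsi η) (deriv (rbiPsi η) (‖z‖^2)) (‖z‖^2) :=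
      ((hψ.differentiable one_ne_zero) _).hasDerivAt
    exact (h2.comp_hasFDerivAt z h1).smul (hasFDerivAt_id z)
  refine ⟨hC1, ?_, ?_⟩
  · -- growth
    have hcont : Continuous fun z : EuclideanSpace ℝ (Fin N) =>
        ‖fderiv ℝ (fun z : EuclideanSpace ℝ (Fin N) => rbiPsi η (‖z‖^2) • z) z‖ :=
      (hC1.continuous_fderiv one_ne_zero).norm
    obtain ⟨z₀, -, hz₀⟩ := (isCompact_closedBall (0 : EuclideanSpace ℝ (Fin N)) 1).exists_isMaxOn
      ⟨0, Metric.mem_closedBall_self zero_le_one⟩ hcont.continuousOn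
    set B : ℝ := ‖fderiv ℝ (fun z : EuclideanSpace ℝ (Fin N) => rbiPsi η (‖z‖^2) • z) z₀‖ with hBdef
    have hmaxnn : 0 ≤ max B c := le_trans hcpos.le (le_max_right _ _)
    refine ⟨c + max B c + 1, by linarith [le_max_right B c], ?_⟩
    intro z
    have hnormA : ‖rbiPsi η (‖z‖^2) • z‖ ≤ c * ‖z‖ := by
      rw [norm_smul, Real.norm_eq_abs, abs_of_pos (hψpos _)]
      exact mul_le_mul_of_nonneg_right (hψle _) (norm_nonneg z)
    have hfdbound : ‖fderiv ℝ (fun z : EuclideanSpace ℝ (Fin N) => rbiPsi η (‖z‖^2) • z) z‖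
        ≤ max B c := by
      rcases le_or_gt ‖z‖ 1 with h | h
      · exact le_trans (hz₀ (mem_closedBall_zero_iff.2 h)) (le_max_left _ _)
      · have hev : (fun z : EuclideanSpace ℝ (Fin N) => rbiPsi η (‖z‖^2) • z)
            =ᶠ[nhds z] fun x => c • x := by
          have hopen : IsOpen {x : EuclideanSpace ℝ (Fin N) | 1 - ε / 2 < ‖x‖} :=
            isOpen_lt continuous_const continuous_norm
          have hzmem : 1 - ε / 2 < ‖z‖ := by linarith [hε.1]
          filter_upwards [hopen.mem_nhds hzmem] with x hx
          have hx2 : (1 - ε / 2)^2 < ‖x‖^2 := by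
            have h0 : (0:ℝ) ≤ 1 - ε / 2 := by linarith [hε.2]
            nlinarith [hx]
          rw [rbi_psi_high hε hhigh _ hx2]
        rw [hev.fderiv_eq]
        have hid : fderiv ℝ (fun x : EuclideanSpace ℝ (Fin N) => c • x) z
            = c • ContinuousLinearMap.id ℝ (EuclideanSpace ℝ (Fin N)) :=
          ((hasFDerivAt_id z).const_smul c).fderiv
        rw [hid, norm_smul, Real.norm_eq_abs, abs_of_pos hcpos]
        calc c * ‖ContinuousLinearMap.id ℝ (EuclideanSpace ℝ (Fin N))‖ ≤ c * 1 :=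
              mul_le_mul_of_nonneg_left (ContinuousLinearMap.norm_id_le) hcpos.le
          _ = c := mul_one c
          _ ≤ max B c := le_max_right _ _
    nlinarith [norm_nonneg z, mul_le_mul_of_nonneg_right hfdbound (norm_nonneg z)]
  · -- ellipticity
    intro z lam
    rw [(hD z).fderiv]
    have hexp : (rbiPsi η (‖z‖^2) • ContinuousLinearMap.id ℝ (EuclideanSpace ℝ (Fin N)) +
          ((deriv (rbiPsi η) (‖z‖^2)) • (2 • innerSL ℝ z)).smulRight z) lam
        = rbiPsi η (‖z‖^2) • lam +
          (deriv (rbiPsi η) (‖z‖^2) * (2 * (inner ℝ z lam : ℝ))) • z := by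
      simp [ContinuousLinearMap.smulRight_apply, two_smul, smul_smul, mul_assoc]
      ring_nf
    rw [hexp, inner_add_left, real_inner_smul_left, real_inner_smul_left,
      real_inner_self_eq_norm_sq]
    have h1 : 1 ≤ rbiPsi η (‖z‖^2) := hψge1 _ (sq_nonneg _)
    have h2 : 0 ≤ deriv (rbiPsi η) (‖z‖^2) :=
      rbi_deriv_nonneg hψmono ((hψ.differentiable one_ne_zero _).hasDerivAt)
    nlinarith [sq_nonneg ‖lam‖, mul_nonneg h2 (sq_nonneg (inner ℝ z lam : ℝ)),
      sq_nonneg (inner ℝ z lam : ℝ)]
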